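/- Let s ∈ L \ C and let p be any best approximation to s from D = {q ∈ ℝ≥0ⁿ : ‖q‖₁ = λ₁, ‖q‖₂ = λ₂}. Then p_i = 0 for every coordinate i with s_i ≤ 0. -/

import Mathlib

/-!
On `D` the norm is constant, so the best approximation `p` maximises `⟪q, s⟫` over `D`.
If `s i ≤ 0 < p i`, equal coordinate sums give an index `j` with `p j < s j`. Shift an amount
`δ` from entry `i` to entry `j` of `p` (for `δ = p i - p j` this is the swap of the two
entries), then contract the result towards the constant vector `c` with entries `λ₁ / n` until
it is back on the sphere around `c` that contains `D`; being a convex combination with `c`, the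
new point stays nonnegative. The shift gains `δ (s j - s i)` in correlation with `s - c` but
raises the squared distance to `c` by only `2 δ (p j - p i + δ)`, so by Cauchy–Schwarz the
contracted point is strictly better, contradicting optimality.
-/

noncomputable section

def l1 {n : ℕ} (x : EuclideanSpace ℝ (Fin n)) : ℝ := ∑ i, |x i|

def projSet {n : ℕ} (M : Set (EuclideanSpace ℝ (Fin n))) (x : EuclideanSpace ℝ (Fin n)) :
    Set (EuclideanSpace ℝ (Fin n)) :=
  {p | p ∈ M ∧ ∀ q ∈ M, ‖p - x‖ ≤ ‖q - x‖}

open scoped RealInnerProductSpace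

section InnerProductSpace

variable {E : Type*} [NormedAddCommGroup E] [InnerProductSpace ℝ E]

theorem inner_lt_div_norm_mul_inner_add {x t d : E} (ht : ‖t‖ ≤ ‖x‖)
    (hxd : ‖x‖ ≤ ‖x + d‖) (h : ‖x + d‖ ^ 2 - ‖x‖ ^ 2 < 2 * ⟪d, t⟫) :
    ⟪x, t⟫ < ‖x‖ / ‖x + d‖ * ⟪x + d, t⟫ := by
  have hx : 0 < ‖x‖ := by
    by_contra! hx
    have ht0 : t = 0 := norm_le_zero_iff.1 (ht.trans hx)
    rw [ht0, inner_zero_right] at h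
    nlinarith [norm_nonneg x]
  have hw : 0 < ‖x + d‖ := hx.trans_le hxd
  have hCS : ⟪x, t⟫ ≤ ‖x‖ ^ 2 :=
    (real_inner_le_norm x t).trans (by nlinarith [norm_nonneg t])
  rw [div_mul_eq_mul_div, lt_div_iff₀ hw, inner_add_left]
  -- with `ρ = ‖x‖`, `w = ‖x + d‖`: `⟪x, t⟫ (w - ρ) ≤ ρ² (w - ρ) ≤ ρ (w² - ρ²) / 2 < ρ ⟪d, t⟫`
  nlinarith [mul_le_mul_of_nonneg_left hCS (sub_nonneg.2 hxd), mul_lt_mul_of_pos_left h hx,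
    mul_nonneg hx.le (sq_nonneg (‖x + d‖ - ‖x‖))]

theorem norm_add_div_norm_smul_eq {c x y : E} (hxc : ⟪x, c⟫ = 0) (hyc : ⟪y, c⟫ = 0)
    (hxy : ‖x‖ ≤ ‖y‖) : ‖c + (‖x‖ / ‖y‖) • y‖ = ‖c + x‖ := by
  have hnorm : ‖(‖x‖ / ‖y‖) • y‖ = ‖x‖ := by
    rw [norm_smul, Real.norm_of_nonneg (by positivity)]
    exact div_mul_cancel_of_imp fun h => le_antisymm (h ▸ hxy) (norm_nonneg _)
  rw [← mul_self_inj_of_nonneg (norm_nonneg _) (norm_nonneg _),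
    norm_add_sq_eq_norm_sq_add_norm_sq_real, norm_add_sq_eq_norm_sq_add_norm_sq_real, hnorm]
  · rw [real_inner_comm, hxc]
  · rw [real_inner_comm, inner_smul_left, hyc, mul_zero]

theorem inner_add_lt_inner_add_div_norm_smul {c x t d : E} (hxc : ⟪x, c⟫ = 0)
    (hdc : ⟪d, c⟫ = 0) (ht : ‖t‖ ≤ ‖x‖) (hxd : ‖x‖ ≤ ‖x + d‖)
    (h : ‖x + d‖ ^ 2 - ‖x‖ ^ 2 < 2 * ⟪d, t⟫) :
    ⟪c + x, c + t⟫ < ⟪c + (‖x‖ / ‖x + d‖) • (x + d), c + t⟫ := by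
  rw [inner_add_left, inner_add_left, inner_smul_left, inner_add_right x,
    inner_add_right (x + d), inner_add_left x d c, hxc, hdc]
  simpa using inner_lt_div_norm_mul_inner_add ht hxd h

end InnerProductSpace

variable {n : ℕ}

theorem inner_le_inner_of_mem_projSet {M : Set (EuclideanSpace ℝ (Fin n))}
    {s p q : EuclideanSpace ℝ (Fin n)} (hp : p ∈ projSet M s) (hq : q ∈ M) (hqp : ‖q‖ = ‖p‖) :
    ⟪q, s⟫ ≤ ⟪p, s⟫ := by
  have h := pow_le_pow_left₀ (norm_nonneg _) (hp.2 q hq) 2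
  rw [norm_sub_sq_real, norm_sub_sq_real, hqp] at h
  linarith

theorem l1_eq_sum_of_nonneg {x : EuclideanSpace ℝ (Fin n)} (hx : ∀ k, 0 ≤ x k) :
    l1 x = ∑ k, x k :=
  Finset.sum_congr rfl fun k _ => abs_of_nonneg (hx k)

theorem exists_lt_of_sum_eq_of_lt {ι M : Type*} [Fintype ι] [AddCommMonoid M] [LinearOrder M]
    [IsOrderedCancelAddMonoid M] {f g : ι → M} (hsum : ∑ k, f k = ∑ k, g k) {i : ι}
    (hi : f i < g i) : ∃ j, g j < f j := by
  by_contra! h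
  exact (Finset.sum_lt_sum (fun k _ => h k) ⟨i, Finset.mem_univ i, hi⟩).ne hsum

def constVec (n : ℕ) (a : ℝ) : EuclideanSpace ℝ (Fin n) := WithLp.toLp 2 fun _ => a

@[simp]
theorem constVec_apply (a : ℝ) (k : Fin n) : constVec n a k = a := rfl

theorem inner_constVec_right (x : EuclideanSpace ℝ (Fin n)) (a : ℝ) :
    ⟪x, constVec n a⟫ = a * ∑ k, x k := by
  simp [PiLp.inner_apply, Finset.mul_sum]

theorem sum_constVec (a : ℝ) : ∑ k, constVec n a k = n * a := by
  simp

theorem norm_sub_constVec_sq {x : EuclideanSpace ℝ (Fin n)} {l : ℝ} (hx : ∑ k, x k = l) :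
    ‖x - constVec n (l / n)‖ ^ 2 = ‖x‖ ^ 2 - l ^ 2 / n := by
  rw [norm_sub_sq_real, ← real_inner_self_eq_norm_sq (constVec n _), inner_constVec_right,
    inner_constVec_right, hx, sum_constVec]
  rcases eq_or_ne (n : ℝ) 0 with hn | hn
  · simp [hn]
  · field_simp
    ring

def transfer (i j : Fin n) (δ : ℝ) : EuclideanSpace ℝ (Fin n) :=
  EuclideanSpace.single j δ - EuclideanSpace.single i δ

theorem inner_transfer_right (y : EuclideanSpace ℝ (Fin n)) (i j : Fin n) (δ : ℝ) :
    ⟪y, transfer i j δ⟫ = δ * (y j - y i) := by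
  simp [transfer, inner_sub_right, EuclideanSpace.inner_single_right, mul_sub]

theorem sum_transfer (i j : Fin n) (δ : ℝ) : ∑ k, transfer i j δ k = 0 := by
  simp [transfer]

theorem norm_transfer_sq {i j : Fin n} (hij : i ≠ j) (δ : ℝ) :
    ‖transfer i j δ‖ ^ 2 = 2 * δ ^ 2 := by
  rw [← real_inner_self_eq_norm_sq, inner_transfer_right]
  simp [transfer, hij, hij.symm]
  ring

theorem add_transfer_apply_nonneg {p : EuclideanSpace ℝ (Fin n)} (hp : ∀ k, 0 ≤ p k) (i j : Fin n)
    {δ : ℝ} (hδ : 0 ≤ δ) (hδp : δ ≤ p i) (k : Fin n) : 0 ≤ (p + transfer i j δ) k := by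
  simp only [transfer, PiLp.add_apply, PiLp.sub_apply, PiLp.single_apply]
  split_ifs <;> subst_vars <;> linarith [hp k]

theorem exists_inner_lt_of_transfer {p s : EuclideanSpace ℝ (Fin n)} (hp : ∀ k, 0 ≤ p k)
    (hsum : ∑ k, s k = ∑ k, p k) (hnorm : ‖s‖ = ‖p‖) {i j : Fin n} (hij : i ≠ j) {δ : ℝ}
    (hδ : 0 < δ) (hδp : δ ≤ p i) (hδlow : p i - p j ≤ δ) (hδup : δ + (p j - p i) < s j - s i) :
    ∃ q : EuclideanSpace ℝ (Fin n),
      (∀ k, 0 ≤ q k) ∧ ∑ k, q k = ∑ k, p k ∧ ‖q‖ = ‖p‖ ∧ ⟪p, s⟫ < ⟪q, s⟫ := by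
  set l := ∑ k, p k
  set c := constVec n (l / n)
  set x := p - c
  set t := s - c
  set d := transfer i j δ
  have hcsum : ∑ k, c k = l := by
    have hn : (n : ℝ) ≠ 0 := by exact_mod_cast i.pos.ne'
    rw [sum_constVec, mul_div_cancel₀ _ hn]
  have hxsum : ∑ k, x k = 0 := by simp [x, Finset.sum_sub_distrib, hcsum, l]
  have hxc : ⟪x, c⟫ = 0 := by rw [inner_constVec_right, hxsum, mul_zero]
  have hdc : ⟪d, c⟫ = 0 := by rw [inner_constVec_right, sum_transfer, mul_zero]
  have hyc : ⟪x + d, c⟫ = 0 := by rw [inner_add_left, hxc, hdc, add_zero]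
  have htx : ‖t‖ = ‖x‖ := by
    rw [← sq_eq_sq₀ (norm_nonneg _) (norm_nonneg _), norm_sub_constVec_sq hsum,
      norm_sub_constVec_sq rfl, hnorm]
  have hgap : ‖x + d‖ ^ 2 - ‖x‖ ^ 2 = 2 * δ * (p j - p i) + 2 * δ ^ 2 := by
    rw [norm_add_sq_real, inner_transfer_right, norm_transfer_sq hij]
    simp [x, c]
    ring
  have hdt : ⟪d, t⟫ = δ * (s j - s i) := by
    rw [real_inner_comm, inner_transfer_right]
    simp [t, c]
  have hxd : ‖x‖ ≤ ‖x + d‖ :=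
    (sq_le_sq₀ (norm_nonneg _) (norm_nonneg _)).1 (by nlinarith)
  have hr0 : 0 ≤ ‖x‖ / ‖x + d‖ := by positivity
  have hr1 : ‖x‖ / ‖x + d‖ ≤ 1 := div_le_one_of_le₀ hxd (norm_nonneg _)
  have hp' : p = c + x := by simp [x]
  have hs' : s = c + t := by simp [t]
  refine ⟨c + (‖x‖ / ‖x + d‖) • (x + d), fun k => ?_, ?_, ?_, ?_⟩
  · have hu := add_transfer_apply_nonneg hp i j hδ.le hδp k
    have hc : 0 ≤ l / n := div_nonneg (Finset.sum_nonneg fun k _ => hp k) (Nat.cast_nonneg n)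
    simp only [PiLp.add_apply, PiLp.smul_apply, PiLp.sub_apply, smul_eq_mul, constVec_apply,
      x, c, d] at hu ⊢
    nlinarith
  · simp [Finset.sum_add_distrib, ← Finset.mul_sum, hcsum, hxsum, d, sum_transfer]
  · rw [hp', norm_add_div_norm_smul_eq hxc hyc hxd]
  · rw [hp', hs']
    exact inner_add_lt_inner_add_div_norm_smul hxc hdc htx.le hxd (by rw [hgap, hdt]; nlinarith)

theorem proj_zero_on_nonpositive_entries_general
    {n : ℕ} (l₁ l₂ : ℝ)
    (L D : Set (EuclideanSpace ℝ (Fin n)))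
    (hL : L = {q | ∑ i, q i = l₁ ∧ ‖q‖ = l₂})
    (hD : D = {q | (∀ i, 0 ≤ q i) ∧ l1 q = l₁ ∧ ‖q‖ = l₂})
    (s : EuclideanSpace ℝ (Fin n)) (hsL : s ∈ L)
    (p : EuclideanSpace ℝ (Fin n)) (hp : p ∈ projSet D s) :
    ∀ i, s i ≤ 0 → p i = 0 := by
  subst hL hD
  obtain ⟨hssum, hsnorm⟩ := hsL
  obtain ⟨hp0, hpl1, hpnorm⟩ := hp.1
  have hpsum : ∑ k, p k = l₁ := (l1_eq_sum_of_nonneg hp0).symm.trans hpl1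
  intro i hsi
  by_contra hpi0
  have hpi : 0 < p i := (hp0 i).lt_of_ne' hpi0
  obtain ⟨j, hj⟩ := exists_lt_of_sum_eq_of_lt (hssum.trans hpsum.symm) (hsi.trans_lt hpi)
  have hij : i ≠ j := by rintro rfl; linarith
  have hsji : s i < s j := by linarith [hp0 j]
  obtain ⟨δ, hδ, hδp, hδlow, hδup⟩ : ∃ δ, 0 < δ ∧ δ ≤ p i ∧ p i - p j ≤ δ ∧
      δ + (p j - p i) < s j - s i := by
    rcases lt_or_ge (p j) (p i) with hpji | hpij
    · exact ⟨p i - p j, by linarith, by linarith [hp0 j], le_rfl, by linarith⟩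
    · have hpos : 0 < min (p i) ((s j - s i - (p j - p i)) / 2) := lt_min hpi (by linarith)
      exact ⟨_, hpos, min_le_left _ _, by linarith,
        by linarith [min_le_right (p i) ((s j - s i - (p j - p i)) / 2)]⟩
  obtain ⟨q, hq0, hqsum, hqnorm, hlt⟩ := exists_inner_lt_of_transfer hp0
    (hssum.trans hpsum.symm) (hsnorm.trans hpnorm.symm) hij hδ hδp hδlow hδup
  have hqD : q ∈ {q | (∀ i, 0 ≤ q i) ∧ l1 q = l₁ ∧ ‖q‖ = l₂} :=
    ⟨hq0, (l1_eq_sum_of_nonneg hq0).trans (hqsum.trans hpsum), hqnorm.trans hpnorm⟩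
  exact (inner_le_inner_of_mem_projSet hp hqD hqnorm).not_gt hlt

theorem proj_zero_on_nonpositive_entries
    {n : ℕ} (l₁ l₂ : ℝ) (h1 : 0 < l₁) (h2 : 0 < l₂)
    (hlow : l₂ ≤ l₁) (hhigh : l₁ ≤ Real.sqrt n * l₂)
    (L C D : Set (EuclideanSpace ℝ (Fin n)))
    (hL : L = {q | ∑ i, q i = l₁ ∧ ‖q‖ = l₂})
    (hC : C = {c | (∀ i, 0 ≤ c i) ∧ ∑ i, c i = l₁})
    (hD : D = {q | (∀ i, 0 ≤ q i) ∧ l1 q = l₁ ∧ ‖q‖ = l₂})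
    (s : EuclideanSpace ℝ (Fin n)) (hsL : s ∈ L) (hsC : s ∉ C)
    (p : EuclideanSpace ℝ (Fin n)) (hp : p ∈ projSet D s) :
    ∀ i, s i ≤ 0 → p i = 0 :=
  proj_zero_on_nonpositive_entries_general l₁ l₂ L D hL hD s hsL p hp

end
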